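/- arXiv:2206.09400 — 9 statements merged into one kernel-verified Lean document; each statement's English description precedes it below -/
import Mathlib

section
/- Let X --f--> M --g--> Y --h--> X[1] be a distinguished triangle in a Hom-finite Krull-Schmidt triangulated K-category T. Then f is right minimal if and only if g is left minimal. -/
/-!
An endomorphism `u` of `Y` with `g ≫ u = g` extends `(𝟙 M, u)` to an endomorphism of the
distinguished triangle whose first component `a` satisfies `a ≫ f = f`; symmetrically, an `a`
with `a ≫ f = f` extends `(a, 𝟙 M)`. Minimality makes the given outer component an isomorphism,
and the two-out-of-three property of morphisms of distinguished triangles, with `𝟙 M` in the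
middle, transfers this to the other outer component.
-/

open CategoryTheory CategoryTheory.Limits CategoryTheory.Pretriangulated

universe v u

variable {C : Type u} [Category.{v} C]

/-- A morphism `f : X ⟶ M` is left minimal if any `g` with `f ≫ g = f` is an isomorphism. -/
def LeftMinimal {X M : C} (f : X ⟶ M) : Prop :=
  ∀ g : M ⟶ M, f ≫ g = f → IsIso g

/-- A morphism `f : X ⟶ M` is right minimal if any `g` with `g ≫ f = f` is an isomorphism. -/
def RightMinimal {X M : C} (f : X ⟶ M) : Prop :=
  ∀ g : X ⟶ X, g ≫ f = f → IsIso g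

section

variable [Preadditive C] [HasZeroObject C] [HasShift C ℤ]
  [∀ n : ℤ, (shiftFunctor C n).Additive] [Pretriangulated C]
  {X M Y : C} {f : X ⟶ M} {g : M ⟶ Y} {h : Y ⟶ X⟦(1 : ℤ)⟧}

theorem RightMinimal.leftMinimal_of_distTriang (hT : Triangle.mk f g h ∈ distTriang C)
    (hf : RightMinimal f) : LeftMinimal g := by
  intro u hu
  have comm₂ : g ≫ u = 𝟙 M ≫ g := by rw [hu, Category.id_comp]
  obtain ⟨a, comm₁, comm₃⟩ := complete_distinguished_triangle_morphism₁ _ _ hT hT (𝟙 M) u comm₂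
  have ha : IsIso a := hf a (comm₁.symm.trans (Category.comp_id f))
  exact isIso₃_of_isIso₁₂ (Triangle.homMk _ _ a (𝟙 M) u comm₁ comm₂ comm₃) hT hT
    ha (inferInstanceAs (IsIso (𝟙 M)))

theorem LeftMinimal.rightMinimal_of_distTriang (hT : Triangle.mk f g h ∈ distTriang C)
    (hg : LeftMinimal g) : RightMinimal f := by
  intro a ha
  have comm₁ : f ≫ 𝟙 M = a ≫ f := by rw [ha, Category.comp_id]
  obtain ⟨u, comm₂, comm₃⟩ := complete_distinguished_triangle_morphism _ _ hT hT a (𝟙 M) comm₁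
  have hu : IsIso u := hg u (comm₂.trans (Category.id_comp g))
  exact isIso₁_of_isIso₂₃ (Triangle.homMk _ _ a (𝟙 M) u comm₁ comm₂ comm₃) hT hT
    (inferInstanceAs (IsIso (𝟙 M))) hu

end

/-- In a distinguished triangle `X ⟶ M ⟶ Y ⟶ X[1]` of a Hom-finite Krull-Schmidt
triangulated `K`-category, `f` is right minimal iff `g` is left minimal. -/
theorem rightMinimal_iff_leftMinimal
    (K : Type*) [Field K] [Preadditive C] [Linear K C] [HasZeroObject C]
    [HasShift C ℤ] [∀ n : ℤ, (shiftFunctor C n).Additive] [Pretriangulated C]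
    [∀ X Y : C, FiniteDimensional K (X ⟶ Y)] [IsIdempotentComplete C]
    {X M Y : C} (f : X ⟶ M) (g : M ⟶ Y) (h : Y ⟶ X⟦(1 : ℤ)⟧)
    (hT : Triangle.mk f g h ∈ distTriang C) :
    RightMinimal f ↔ LeftMinimal g :=
  ⟨RightMinimal.leftMinimal_of_distTriang hT, LeftMinimal.rightMinimal_of_distTriang hT⟩
end

section
/- Let X --f--> M --g--> Y --h--> X[1] be a distinguished triangle in a Hom-finite Krull-Schmidt triangulated K-category T. Then f is right minimal if and only if h lies in the Jacobson radical of T (i.e., h is a radical morphism). -/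
open CategoryTheory CategoryTheory.Limits CategoryTheory.Pretriangulated

universe v u

variable {C : Type u} [Category.{v} C]

/-- A morphism `h : Y ⟶ Z` belongs to the Jacobson radical of the category iff for every
`l : Z ⟶ Y` the endomorphism `𝟙 Y - h ≫ l` is invertible. -/
def IsRadicalMorphism [Preadditive C] {Y Z : C} (h : Y ⟶ Z) : Prop :=
  ∀ l : Z ⟶ Y, IsIso (𝟙 Y - h ≫ l)

/-!
An endomorphism `a` of `X` with `a ≫ f = f` extends, by the axiom TR3, to an endomorphism
`(a, 𝟙, c)` of the triangle, and conversely every `c` with `g ≫ c = g` arises this way.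
By the five lemma `a` is invertible iff `c` is. Since `g ≫ c = g` says that `c - 𝟙` is killed
by `g`, exactness of `Hom(-, Y)` along the triangle shows that these `c` are exactly the
endomorphisms `𝟙 - h ≫ l`. Hence all such `a` are invertible iff all `𝟙 - h ≫ l` are.
-/

namespace CategoryTheory.Pretriangulated

variable [HasShift C ℤ] {T : Triangle C}

lemma hom₁_comp_mor₁_of_hom₂_eq_id {φ : T ⟶ T} (hφ : φ.hom₂ = 𝟙 _) :
    φ.hom₁ ≫ T.mor₁ = T.mor₁ := by
  rw [← φ.comm₁, hφ, Category.comp_id]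

lemma mor₂_comp_hom₃_of_hom₂_eq_id {φ : T ⟶ T} (hφ : φ.hom₂ = 𝟙 _) :
    T.mor₂ ≫ φ.hom₃ = T.mor₂ := by
  rw [φ.comm₂, hφ, Category.id_comp]

variable [Preadditive C] [HasZeroObject C] [∀ n : ℤ, (shiftFunctor C n).Additive]
  [Pretriangulated C]

lemma isIso₁_iff_isIso₃_of_isIso₂ {T T' : Triangle C} (φ : T ⟶ T') (hT : T ∈ distTriang C)
    (hT' : T' ∈ distTriang C) (h₂ : IsIso φ.hom₂) : IsIso φ.hom₁ ↔ IsIso φ.hom₃ :=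
  ⟨fun h₁ => isIso₃_of_isIso₁₂ φ hT hT' h₁ h₂, fun h₃ => isIso₁_of_isIso₂₃ φ hT hT' h₂ h₃⟩

variable (hT : T ∈ distTriang C)
include hT

lemma exists_triangle_endo_of_comp_mor₁_eq {a : T.obj₁ ⟶ T.obj₁} (ha : a ≫ T.mor₁ = T.mor₁) :
    ∃ φ : T ⟶ T, φ.hom₁ = a ∧ φ.hom₂ = 𝟙 _ := by
  obtain ⟨c, hc₂, hc₃⟩ := complete_distinguished_triangle_morphism T T hT hT a (𝟙 _)
    (by rw [ha, Category.comp_id])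
  exact ⟨Triangle.homMk T T a (𝟙 _) c (by rw [ha, Category.comp_id]) hc₂ hc₃, rfl, rfl⟩

lemma exists_triangle_endo_of_mor₂_comp_eq {c : T.obj₃ ⟶ T.obj₃} (hc : T.mor₂ ≫ c = T.mor₂) :
    ∃ φ : T ⟶ T, φ.hom₂ = 𝟙 _ ∧ φ.hom₃ = c := by
  obtain ⟨a, ha₁, ha₃⟩ := complete_distinguished_triangle_morphism₁ T T hT hT (𝟙 _) c
    (by rw [hc, Category.id_comp])
  exact ⟨Triangle.homMk T T a (𝟙 _) c ha₁ (by rw [hc, Category.id_comp]) ha₃, rfl, rfl⟩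

lemma mor₂_comp_eq_self_iff (c : T.obj₃ ⟶ T.obj₃) :
    T.mor₂ ≫ c = T.mor₂ ↔ ∃ l : T.obj₁⟦(1 : ℤ)⟧ ⟶ T.obj₃, c = 𝟙 _ - T.mor₃ ≫ l := by
  constructor
  · intro hc
    obtain ⟨l, hl⟩ := Triangle.yoneda_exact₃ T hT (𝟙 _ - c)
      (by rw [Preadditive.comp_sub, hc, Category.comp_id, sub_self])
    exact ⟨l, by rw [← hl, sub_sub_cancel]⟩
  · rintro ⟨l, rfl⟩
    rw [Preadditive.comp_sub, comp_distTriang_mor_zero₂₃_assoc _ hT, Category.comp_id,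
      zero_comp, sub_zero]

end CategoryTheory.Pretriangulated

/-- In a distinguished triangle `X ⟶ M ⟶ Y ⟶ X[1]` of a Hom-finite Krull-Schmidt
triangulated `K`-category, `f` is right minimal iff `h` is a radical morphism. -/
theorem rightMinimal_iff_radical
    (K : Type*) [Field K] [Preadditive C] [Linear K C] [HasZeroObject C]
    [HasShift C ℤ] [∀ n : ℤ, (shiftFunctor C n).Additive] [Pretriangulated C]
    [∀ X Y : C, FiniteDimensional K (X ⟶ Y)] [IsIdempotentComplete C]
    {X M Y : C} (f : X ⟶ M) (g : M ⟶ Y) (h : Y ⟶ X⟦(1 : ℤ)⟧)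
    (hT : Triangle.mk f g h ∈ distTriang C) :
    RightMinimal f ↔ IsRadicalMorphism h := by
  constructor
  · intro hmin l
    obtain ⟨φ, hφ₂, hφ₃⟩ := exists_triangle_endo_of_mor₂_comp_eq hT
      ((mor₂_comp_eq_self_iff hT _).2 ⟨l, rfl⟩)
    have hφ₁ : IsIso φ.hom₁ := hmin _ (hom₁_comp_mor₁_of_hom₂_eq_id hφ₂)
    exact hφ₃ ▸ (isIso₁_iff_isIso₃_of_isIso₂ φ hT hT (hφ₂ ▸ inferInstance)).1 hφ₁
  · intro hrad a ha
    obtain ⟨φ, rfl, hφ₂⟩ := exists_triangle_endo_of_comp_mor₁_eq hT ha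
    obtain ⟨l, hl⟩ := (mor₂_comp_eq_self_iff hT φ.hom₃).1 (mor₂_comp_hom₃_of_hom₂_eq_id hφ₂)
    have hφ₃ : IsIso φ.hom₃ := hl ▸ hrad l
    exact (isIso₁_iff_isIso₃_of_isIso₂ φ hT hT (hφ₂ ▸ inferInstance)).2 hφ₃
end

section
/- Let C --f--> A --g--> B --h--> C[1] be a distinguished triangle in a triangulated category T and I an ideal of T. If g belongs to I, then g is a right I-approximation of B if and only if h is a left Gh_I-approximation of B. -/
open CategoryTheory CategoryTheory.Limits CategoryTheory.Pretriangulated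

universe v u

variable {C : Type u} [Category.{v} C]

/-- An ideal of a preadditive category: an additive sub-bifunctor of `Hom(-,-)`. -/
structure CatIdeal (C : Type u) [Category.{v} C] [Preadditive C] where
  carrier : ∀ {X Y : C}, Set (X ⟶ Y)
  add_mem : ∀ {X Y : C} {f g : X ⟶ Y}, f ∈ carrier → g ∈ carrier → f + g ∈ carrier
  zero_mem : ∀ {X Y : C}, (0 : X ⟶ Y) ∈ carrier
  neg_mem : ∀ {X Y : C} {f : X ⟶ Y}, f ∈ carrier → -f ∈ carrier
  comp_left : ∀ {X Y Z : C} (f : X ⟶ Y) {g : Y ⟶ Z}, g ∈ carrier → f ≫ g ∈ carrier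
  comp_right : ∀ {X Y Z : C} {f : X ⟶ Y} (g : Y ⟶ Z), f ∈ carrier → f ≫ g ∈ carrier

variable [Preadditive C] [HasZeroObject C] [HasShift C ℤ] [∀ n : ℤ, (shiftFunctor C n).Additive] [Pretriangulated C]

/-- `h` is an `I`-ghost: `i ≫ h = 0` for every composable `i ∈ I`. -/
def IsGhost (I : CatIdeal C) {B W : C} (h : B ⟶ W) : Prop :=
  ∀ {X : C} (i : X ⟶ B), i ∈ I.carrier → i ≫ h = 0

/-- `g ∈ I` is a right `I`-approximation of `B`: every morphism of `I` with target `B`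
factors through `g`. -/
def IsRightApprox (I : CatIdeal C) {A B : C} (g : A ⟶ B) : Prop :=
  g ∈ I.carrier ∧ ∀ {X : C} (i : X ⟶ B), i ∈ I.carrier → ∃ j : X ⟶ A, j ≫ g = i

/-- `h` is a left `Gh_I`-approximation of `B`: `h ∈ Gh_I` and every morphism of `Gh_I`
with source `B` factors through `h`. -/
def IsLeftGhostApprox (I : CatIdeal C) {B W : C} (h : B ⟶ W) : Prop :=
  IsGhost I h ∧ ∀ {V : C} (j : B ⟶ V), IsGhost I j → ∃ t : W ⟶ V, h ≫ t = j

/-- In a distinguished triangle `C₀ ⟶ A ⟶ B ⟶ C₀[1]` with `g ∈ I`: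
`g` is a right `I`-approximation of `B` iff `h` is a left `Gh_I`-approximation of `B`. -/
theorem rightApprox_iff_leftGhostApprox (I : CatIdeal C)
    {C₀ A B : C} (f : C₀ ⟶ A) (g : A ⟶ B) (h : B ⟶ C₀⟦(1 : ℤ)⟧)
    (hT : Triangle.mk f g h ∈ distTriang C) (hg : g ∈ I.carrier) :
    IsRightApprox I g ↔ IsLeftGhostApprox I h := by
  have hgh : g ≫ h = 0 := comp_distTriang_mor_zero₂₃ _ hT
  constructor
  · rintro ⟨-, hfac⟩
    constructor
    · intro X i hi
      obtain ⟨j, hj⟩ := hfac i hi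
      rw [← hj, Category.assoc, hgh, Limits.comp_zero]
    · intro V j hj
      obtain ⟨t, ht⟩ := Triangle.yoneda_exact₃ _ hT j (hj g hg)
      exact ⟨t, ht.symm⟩
  · rintro ⟨hghost, -⟩
    refine ⟨hg, fun {X} i hi => ?_⟩
    obtain ⟨j, hj⟩ := Triangle.coyoneda_exact₃ _ hT i (hghost i hi)
    exact ⟨j, hj.symm⟩
end

section
/- If (I, R) is an ideal torsion pair in a triangulated category T, then I = CoGh_R and R = Gh_I. -/
open CategoryTheory CategoryTheory.Limits CategoryTheory.Pretriangulated

universe v u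

variable {C : Type u} [Category.{v} C]

variable [Preadditive C] [HasZeroObject C] [HasShift C ℤ] [∀ n : ℤ, (shiftFunctor C n).Additive] [Pretriangulated C]

/-- `(I, R)` is an ideal torsion pair: every composite `i ≫ g ≫ r` with `i ∈ I`, `r ∈ R`
vanishes, and every object sits in a distinguished triangle `X ⟶ T₀ ⟶ Y ⟶ X[1]` with the
first morphism in `I` and the second in `R`. -/
def IsIdealTorsionPair (I R : CatIdeal C) : Prop :=
  (∀ {A B B' D : C} (i : A ⟶ B) (g : B ⟶ B') (r : B' ⟶ D),
      i ∈ I.carrier → r ∈ R.carrier → i ≫ g ≫ r = 0) ∧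
  (∀ T₀ : C, ∃ (X Y : C) (f : X ⟶ T₀) (g : T₀ ⟶ Y) (h : Y ⟶ X⟦(1 : ℤ)⟧),
      Triangle.mk f g h ∈ (distTriang C) ∧ f ∈ I.carrier ∧ g ∈ R.carrier)

/-- If `(I, R)` is an ideal torsion pair, then `I = CoGh_R` and `R = Gh_I`. -/
theorem idealTorsionPair_coghost_ghost (I R : CatIdeal C)
    (hIR : IsIdealTorsionPair I R) :
    (∀ {X Y : C} (f : X ⟶ Y),
        f ∈ I.carrier ↔ ∀ {Z : C} (r : Y ⟶ Z), r ∈ R.carrier → f ≫ r = 0) ∧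
    (∀ {X Y : C} (f : X ⟶ Y),
        f ∈ R.carrier ↔ ∀ {W : C} (i : W ⟶ X), i ∈ I.carrier → i ≫ f = 0) := by
  obtain ⟨hvan, htri⟩ := hIR
  constructor
  · intro X Y f
    constructor
    · intro hf Z r hr
      simpa using hvan f (𝟙 Y) r hf hr
    · intro hf
      obtain ⟨A, B, a, b, h, hT, ha, hb⟩ := htri Y
      obtain ⟨g, hg⟩ := Triangle.coyoneda_exact₂ _ hT f (hf b hb)
      rw [hg]
      exact I.comp_left g ha
  · intro X Y f
    constructor
    · intro hf W i hi
      simpa using hvan i (𝟙 X) f hi hf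
    · intro hf
      obtain ⟨A, B, a, b, h, hT, ha, hb⟩ := htri X
      obtain ⟨g, hg⟩ := Triangle.yoneda_exact₂ _ hT f (hf a ha)
      rw [hg]
      exact R.comp_right g hb
end

section
/- If (I, R) is an ideal torsion pair in a triangulated category T, then I is contravariantly finite (every object has a right I-approximation) and R is covariantly finite (every object has a left R-approximation). -/
open CategoryTheory CategoryTheory.Limits CategoryTheory.Pretriangulated

universe v u

variable {C : Type u} [Category.{v} C]

variable [Preadditive C] [HasZeroObject C] [HasShift C ℤ] [∀ n : ℤ, (shiftFunctor C n).Additive] [Pretriangulated C]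

/-! The triangle `X ⟶ T₀ ⟶ Y ⟶ X⟦1⟧` of the torsion pair supplies both approximations: a morphism
of `I` into `T₀` is killed by `T₀ ⟶ Y ∈ R`, so it lifts along `X ⟶ T₀` by exactness of
`Hom(X', -)` on distinguished triangles; dually, a morphism of `R` out of `T₀` vanishes on
`X ⟶ T₀ ∈ I` and so extends along `T₀ ⟶ Y`. -/

namespace CatIdeal

variable {D : Type*} [Category D] [Preadditive D]

def IsRightApproximation (I : CatIdeal D) {X T₀ : D} (i : X ⟶ T₀) : Prop :=
  i ∈ I.carrier ∧ ∀ {X' : D} (j : X' ⟶ T₀), j ∈ I.carrier → ∃ t : X' ⟶ X, t ≫ i = j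

def IsLeftApproximation (R : CatIdeal D) {T₀ Y : D} (r : T₀ ⟶ Y) : Prop :=
  r ∈ R.carrier ∧ ∀ {Y' : D} (s : T₀ ⟶ Y'), s ∈ R.carrier → ∃ t : Y ⟶ Y', r ≫ t = s

end CatIdeal

namespace IsIdealTorsionPair

theorem comp_eq_zero {I R : CatIdeal C} (hIR : IsIdealTorsionPair I R) {A B D : C}
    {i : A ⟶ B} {r : B ⟶ D} (hi : i ∈ I.carrier) (hr : r ∈ R.carrier) : i ≫ r = 0 := by
  simpa using hIR.1 i (𝟙 B) r hi hr

end IsIdealTorsionPair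

section DistinguishedTriangle

variable {T : Triangle C}

theorem isRightApproximation_mor₁_of_distTriang (I : CatIdeal C) (hT : T ∈ distTriang C)
    (h₁ : T.mor₁ ∈ I.carrier)
    (hI : ∀ {X' : C} (j : X' ⟶ T.obj₂), j ∈ I.carrier → j ≫ T.mor₂ = 0) :
    I.IsRightApproximation T.mor₁ := by
  refine ⟨h₁, fun j hj => ?_⟩
  obtain ⟨t, ht⟩ := Triangle.coyoneda_exact₂ T hT j (hI j hj)
  exact ⟨t, ht.symm⟩

theorem isLeftApproximation_mor₂_of_distTriang (R : CatIdeal C) (hT : T ∈ distTriang C)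
    (h₂ : T.mor₂ ∈ R.carrier)
    (hR : ∀ {Y' : C} (s : T.obj₂ ⟶ Y'), s ∈ R.carrier → T.mor₁ ≫ s = 0) :
    R.IsLeftApproximation T.mor₂ := by
  refine ⟨h₂, fun s hs => ?_⟩
  obtain ⟨t, ht⟩ := Triangle.yoneda_exact₂ T hT s (hR s hs)
  exact ⟨t, ht.symm⟩

end DistinguishedTriangle

/-- If `(I, R)` is an ideal torsion pair, then `I` is contravariantly finite and `R` is
covariantly finite. -/
theorem idealTorsionPair_functorially_finite (I R : CatIdeal C)
    (hIR : IsIdealTorsionPair I R) :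
    (∀ T₀ : C, ∃ (X : C) (i : X ⟶ T₀), i ∈ I.carrier ∧
        ∀ {X' : C} (j : X' ⟶ T₀), j ∈ I.carrier → ∃ t : X' ⟶ X, t ≫ i = j) ∧
    (∀ T₀ : C, ∃ (Y : C) (r : T₀ ⟶ Y), r ∈ R.carrier ∧
        ∀ {Y' : C} (s : T₀ ⟶ Y'), s ∈ R.carrier → ∃ t : Y ⟶ Y', r ≫ t = s) := by
  constructor
  · intro T₀
    obtain ⟨X, Y, f, g, _, hT, hf, hg⟩ := hIR.2 T₀
    exact ⟨X, f, isRightApproximation_mor₁_of_distTriang I hT hf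
      fun j hj => hIR.comp_eq_zero hj hg⟩
  · intro T₀
    obtain ⟨X, Y, f, g, _, hT, hf, hg⟩ := hIR.2 T₀
    exact ⟨Y, g, isLeftApproximation_mor₂_of_distTriang R hT hg
      fun s hs => hIR.comp_eq_zero hf hs⟩
end

section
/- Let T be a triangulated category and I a contravariantly finite ideal of T. Then (I, Gh_I) is an ideal torsion pair. Dually, if I is covariantly finite, then (CoGh_I, I) is an ideal torsion pair. -/
open CategoryTheory CategoryTheory.Limits CategoryTheory.Pretriangulated

universe v u

variable {C : Type u} [Category.{v} C]

variable [Preadditive C]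

/-- The ghost ideal `Gh_I`: morphisms `h` with `i ≫ h = 0` for all composable `i ∈ I`. -/
def CatIdeal.ghost (I : CatIdeal C) : CatIdeal C where
  carrier {X Y} := {h : X ⟶ Y | ∀ {W : C} (i : W ⟶ X), i ∈ I.carrier → i ≫ h = 0}
  add_mem := by
    intro X Y f g hf hg W i hi
    rw [Preadditive.comp_add, hf i hi, hg i hi, add_zero]
  zero_mem := by intro X Y W i _; exact Limits.comp_zero
  neg_mem := by intro X Y f hf W i hi; rw [Preadditive.comp_neg, hf i hi, neg_zero]
  comp_left := by
    intro X Y Z f g hg W i hi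
    rw [← Category.assoc]; exact hg _ (I.comp_right f hi)
  comp_right := by
    intro X Y Z f g hf W i hi
    rw [← Category.assoc, hf i hi, Limits.zero_comp]

/-- The coghost ideal `CoGh_I`: morphisms `h` with `h ≫ i = 0` for all composable `i ∈ I`. -/
def CatIdeal.coghost (I : CatIdeal C) : CatIdeal C where
  carrier {X Y} := {h : X ⟶ Y | ∀ {W : C} (i : Y ⟶ W), i ∈ I.carrier → h ≫ i = 0}
  add_mem := by
    intro X Y f g hf hg W i hi
    rw [Preadditive.add_comp, hf i hi, hg i hi, add_zero]
  zero_mem := by intro X Y W i _; exact Limits.zero_comp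
  neg_mem := by intro X Y f hf W i hi; rw [Preadditive.neg_comp, hf i hi, neg_zero]
  comp_left := by
    intro X Y Z f g hg W i hi
    rw [Category.assoc, hg i hi, Limits.comp_zero]
  comp_right := by
    intro X Y Z f g hf W i hi
    rw [Category.assoc]; exact hf _ (I.comp_left g hi)

variable [HasZeroObject C] [HasShift C ℤ] [∀ n : ℤ, (shiftFunctor C n).Additive]
  [Pretriangulated C]

/-- If `I` is contravariantly finite then `(I, Gh_I)` is an ideal torsion pair; dually, if
`I` is covariantly finite then `(CoGh_I, I)` is an ideal torsion pair. -/
theorem idealTorsionPair_of_finite (I : CatIdeal C) :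
    ((∀ T₀ : C, ∃ (X : C) (i : X ⟶ T₀), i ∈ I.carrier ∧
        ∀ {X' : C} (j : X' ⟶ T₀), j ∈ I.carrier → ∃ t : X' ⟶ X, t ≫ i = j) →
      IsIdealTorsionPair I I.ghost) ∧
    ((∀ T₀ : C, ∃ (Y : C) (r : T₀ ⟶ Y), r ∈ I.carrier ∧
        ∀ {Y' : C} (s : T₀ ⟶ Y'), s ∈ I.carrier → ∃ t : Y ⟶ Y', r ≫ t = s) →
      IsIdealTorsionPair I.coghost I) := by
  constructor
  · intro happrox
    constructor
    · intro A B B' D i g r hi hr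
      rw [← Category.assoc]
      exact hr _ (I.comp_right g hi)
    · intro T₀
      obtain ⟨X, i, hi, hmin⟩ := happrox T₀
      obtain ⟨Y, g, h, hT⟩ := Pretriangulated.distinguished_cocone_triangle i
      refine ⟨X, Y, i, g, h, hT, hi, ?_⟩
      intro W j hj
      obtain ⟨t, ht⟩ := hmin j hj
      have h0 : i ≫ g = 0 := Pretriangulated.comp_distTriang_mor_zero₁₂ _ hT
      rw [← ht, Category.assoc, h0, comp_zero]
  · intro happrox
    constructor
    · intro A B B' D i g r hi hr
      exact hi _ (I.comp_left g hr)
    · intro T₀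
      obtain ⟨Y, r, hr, hmin⟩ := happrox T₀
      obtain ⟨X, f, h, hT⟩ := Pretriangulated.distinguished_cocone_triangle₁ r
      refine ⟨X, Y, f, r, h, hT, ?_, hr⟩
      intro W s hs
      obtain ⟨t, ht⟩ := hmin s hs
      have h0 : f ≫ r = 0 := Pretriangulated.comp_distTriang_mor_zero₁₂ _ hT
      rw [← ht, ← Category.assoc, h0, zero_comp]
end

section
/- In a Hom-finite Krull-Schmidt triangulated K-category T with ideal I, every left I-irreducible morphism is left minimal, and every right I-irreducible morphism is right minimal. -/
open CategoryTheory CategoryTheory.Limits CategoryTheory.Pretriangulated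

universe v u

variable {C : Type u} [Category.{v} C]

variable [Preadditive C]

/-- `h` is left `I`-irreducible: `h ∈ I` and for every factorization `h = h₂ ∘ h₁` with
`h₁ ∈ I`, the morphism `h₂` is a split epimorphism. -/
def LeftIIrreducible (I : CatIdeal C) {X Y : C} (h : X ⟶ Y) : Prop :=
  h ∈ I.carrier ∧ ∀ {Z : C} (h₁ : X ⟶ Z) (h₂ : Z ⟶ Y), h₁ ≫ h₂ = h → h₁ ∈ I.carrier →
    ∃ s : Y ⟶ Z, s ≫ h₂ = 𝟙 Y

/-- `h` is right `I`-irreducible: `h ∈ I` and for every factorization `h = h₂ ∘ h₁` with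
`h₂ ∈ I`, the morphism `h₁` is a split monomorphism. -/
def RightIIrreducible (I : CatIdeal C) {X Y : C} (h : X ⟶ Y) : Prop :=
  h ∈ I.carrier ∧ ∀ {Z : C} (h₁ : X ⟶ Z) (h₂ : Z ⟶ Y), h₁ ≫ h₂ = h → h₂ ∈ I.carrier →
    ∃ r : Z ⟶ X, h₁ ≫ r = 𝟙 X


section Aux
variable (K : Type*) [Field K] [Linear K C]

/-- In a Hom-finite category, a morphism with a left inverse in `End` is an iso. -/
lemma isIso_of_left_inverse {Y : C} [FiniteDimensional K (Y ⟶ Y)]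
    (g s : Y ⟶ Y) (hs : s ≫ g = 𝟙 Y) : IsIso g := by
  let L : (Y ⟶ Y) →ₗ[K] (Y ⟶ Y) :=
    { toFun := fun t => t ≫ g
      map_add' := fun a b => Preadditive.add_comp _ _ _ _ _ _
      map_smul' := fun k a => Linear.smul_comp _ _ _ _ _ _ }
  have hsurj : Function.Surjective L := fun t =>
    ⟨t ≫ s, by simp [L, Category.assoc, hs]⟩
  have hinj : Function.Injective L :=
    (LinearMap.injective_iff_surjective).2 hsurj
  have hgs : g ≫ s = 𝟙 Y := by
    apply hinj
    show (g ≫ s) ≫ g = 𝟙 Y ≫ g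
    rw [Category.assoc, hs, Category.comp_id, Category.id_comp]
  exact ⟨s, hgs, hs⟩

/-- Dually: a right inverse gives an iso. -/
lemma isIso_of_right_inverse {X : C} [FiniteDimensional K (X ⟶ X)]
    (g r : X ⟶ X) (hr : g ≫ r = 𝟙 X) : IsIso g := by
  let L : (X ⟶ X) →ₗ[K] (X ⟶ X) :=
    { toFun := fun t => g ≫ t
      map_add' := fun a b => Preadditive.comp_add _ _ _ _ _ _
      map_smul' := fun k a => Linear.comp_smul _ _ _ _ _ _ }
  have hsurj : Function.Surjective L := fun t =>
    ⟨r ≫ t, by simp [L, ← Category.assoc, hr]⟩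
  have hinj : Function.Injective L :=
    (LinearMap.injective_iff_surjective).2 hsurj
  have hrg : r ≫ g = 𝟙 X := by
    apply hinj
    show g ≫ r ≫ g = g ≫ 𝟙 X
    rw [← Category.assoc, hr, Category.comp_id, Category.id_comp]
  exact ⟨r, hr, hrg⟩

end Aux

/-- In a Hom-finite Krull-Schmidt triangulated `K`-category, every left `I`-irreducible
morphism is left minimal and every right `I`-irreducible morphism is right minimal. -/
theorem iIrreducible_minimal
    (K : Type*) [Field K] [Linear K C] [HasZeroObject C]
    [HasShift C ℤ] [∀ n : ℤ, (shiftFunctor C n).Additive] [Pretriangulated C]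
    [∀ X Y : C, FiniteDimensional K (X ⟶ Y)] [IsIdempotentComplete C]
    (I : CatIdeal C) :
    (∀ {X Y : C} (f : X ⟶ Y), LeftIIrreducible I f →
        ∀ g : Y ⟶ Y, f ≫ g = f → IsIso g) ∧
    (∀ {X Y : C} (f : X ⟶ Y), RightIIrreducible I f →
        ∀ g : X ⟶ X, g ≫ f = f → IsIso g) := by
  constructor
  · intro X Y f hf g hg
    obtain ⟨hfI, hmin⟩ := hf
    obtain ⟨s, hs⟩ := hmin f g hg hfI
    exact isIso_of_left_inverse K g s hs
  · intro X Y f hf g hg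
    obtain ⟨hfI, hmin⟩ := hf
    obtain ⟨r, hr⟩ := hmin g f hg hfI
    exact isIso_of_right_inverse K g r hr
end

section
/- In a Hom-finite Krull-Schmidt triangulated K-category T with ideal I, every I-source map (minimal left I-approximation) is left I-irreducible, and every I-sink map (minimal right I-approximation) is right I-irreducible. -/
open CategoryTheory CategoryTheory.Limits CategoryTheory.Pretriangulated

universe v u

variable {C : Type u} [Category.{v} C]

variable [Preadditive C]

/-- `f` is an `I`-source map of `X`: a left minimal left `I`-approximation. -/
def IsISourceMap (I : CatIdeal C) {X Y : C} (f : X ⟶ Y) : Prop :=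
  f ∈ I.carrier ∧
    (∀ {W : C} (g : X ⟶ W), g ∈ I.carrier → ∃ t : Y ⟶ W, f ≫ t = g) ∧
    (∀ g : Y ⟶ Y, f ≫ g = f → IsIso g)

/-- `g` is an `I`-sink map of `Y`: a right minimal right `I`-approximation. -/
def IsISinkMap (I : CatIdeal C) {X Y : C} (g : X ⟶ Y) : Prop :=
  g ∈ I.carrier ∧
    (∀ {W : C} (j : W ⟶ Y), j ∈ I.carrier → ∃ t : W ⟶ X, t ≫ g = j) ∧
    (∀ u : X ⟶ X, u ≫ g = g → IsIso u)

/-- In a Hom-finite Krull-Schmidt triangulated `K`-category, every `I`-source map is left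
`I`-irreducible and every `I`-sink map is right `I`-irreducible. -/
theorem sourceMap_leftIIrreducible_and_sinkMap_rightIIrreducible
    (K : Type*) [Field K] [Linear K C] [HasZeroObject C]
    [HasShift C ℤ] [∀ n : ℤ, (shiftFunctor C n).Additive] [Pretriangulated C]
    [∀ X Y : C, FiniteDimensional K (X ⟶ Y)] [IsIdempotentComplete C]
    (I : CatIdeal C) :
    (∀ {X Y : C} (f : X ⟶ Y), IsISourceMap I f → LeftIIrreducible I f) ∧
    (∀ {X Y : C} (g : X ⟶ Y), IsISinkMap I g → RightIIrreducible I g) := by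
  constructor
  · intro X Y f hf
    obtain ⟨hfI, happ, hmin⟩ := hf
    refine ⟨hfI, fun {Z} h₁ h₂ hfac h₁I => ?_⟩
    obtain ⟨t, ht⟩ := happ h₁ h₁I
    have : f ≫ (t ≫ h₂) = f := by rw [← Category.assoc, ht, hfac]
    have := hmin _ this
    exact ⟨inv (t ≫ h₂) ≫ t, by rw [Category.assoc, IsIso.inv_comp_eq, Category.comp_id]⟩
  · intro X Y g hg
    obtain ⟨hgI, happ, hmin⟩ := hg
    refine ⟨hgI, fun {Z} h₁ h₂ hfac h₂I => ?_⟩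
    obtain ⟨t, ht⟩ := happ h₂ h₂I
    have : (h₁ ≫ t) ≫ g = g := by rw [Category.assoc, ht, hfac]
    have := hmin _ this
    exact ⟨t ≫ inv (h₁ ≫ t), by rw [← Category.assoc, IsIso.comp_inv_eq, Category.id_comp]⟩
end

section
/- Let T be a Hom-finite Krull-Schmidt K-category over an algebraically closed field with Jacobson radical J, I an ideal, and f: X -> Y a morphism between indecomposable objects. Then f is left I-irreducible if and only if f ∈ I(X, Y) \ (J∘I)(X, Y), where J∘I denotes the product ideal {Σ r_k∘i_k | r_k ∈ J, i_k ∈ I}. -/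
open CategoryTheory CategoryTheory.Limits CategoryTheory.Pretriangulated

universe v u

variable {C : Type u} [Category.{v} C]

variable [Preadditive C]

/-- `f` lies in the Jacobson radical of the category. -/
def InJacobsonRadical {X Y : C} (f : X ⟶ Y) : Prop :=
  ∀ g : Y ⟶ X, IsIso (𝟙 X - f ≫ g)

/-- An object is indecomposable if it is nonzero and any biproduct decomposition of it is
trivial. -/
def IndecomposableObj [HasZeroObject C] [HasBinaryBiproducts C] (X : C) : Prop :=
  ¬ IsZero X ∧ ∀ (Y Z : C), (X ≅ Y ⊞ Z) → IsZero Y ∨ IsZero Z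

/-- Membership in the product ideal `J ∘ I`: finite sums of composites `j ∘ i` with
`i ∈ I` and `j` in the Jacobson radical. -/
def MemRadCompIdeal (I : CatIdeal C) {X Y : C} (f : X ⟶ Y) : Prop :=
  f ∈ AddSubgroup.closure {g : X ⟶ Y | ∃ (Z : C) (i : X ⟶ Z) (j : Z ⟶ Y),
    i ∈ I.carrier ∧ InJacobsonRadical j ∧ i ≫ j = g}


/-!
The endomorphism ring of an indecomposable object `Y` of a Hom-finite idempotent-complete
category is local: by Artinianity of `K[a]`, some power satisfies `a ^ n = a ^ (2n) * b` with `b`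
commuting with `a`, so `a ^ n * b` is an idempotent, hence `0` (and `a` is nilpotent) or `1` (and
`a` is invertible). Consequently a morphism into `Y` lies in the radical exactly when it is not a
split epimorphism. Moreover a sum of composites `j ∘ i` is a single such composite, through a
biproduct. Both sides of the equivalence thus say that no factorization `f = h₂ ∘ h₁` with
`h₁ ∈ I` has `h₂` in the radical.
-/

lemma isIso_id_sub_comp_swap {X Y : C} {f : X ⟶ Y} {g : Y ⟶ X} (h : IsIso (𝟙 X - f ≫ g)) :
    IsIso (𝟙 Y - g ≫ f) := by
  have hl : (𝟙 X - f ≫ g) ≫ inv (𝟙 X - f ≫ g) = 𝟙 X := IsIso.hom_inv_id _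
  have hr : inv (𝟙 X - f ≫ g) ≫ (𝟙 X - f ≫ g) = 𝟙 X := IsIso.inv_hom_id _
  refine ⟨𝟙 Y + g ≫ inv (𝟙 X - f ≫ g) ≫ f, ?_, ?_⟩
  · calc (𝟙 Y - g ≫ f) ≫ (𝟙 Y + g ≫ inv (𝟙 X - f ≫ g) ≫ f)
        = 𝟙 Y - g ≫ f + g ≫ ((𝟙 X - f ≫ g) ≫ inv (𝟙 X - f ≫ g)) ≫ f := by
          simp only [Preadditive.sub_comp, Preadditive.comp_sub, Preadditive.comp_add,
            Category.assoc, Category.id_comp, Category.comp_id]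
      _ = 𝟙 Y := by rw [hl]; simp
  · calc (𝟙 Y + g ≫ inv (𝟙 X - f ≫ g) ≫ f) ≫ (𝟙 Y - g ≫ f)
        = 𝟙 Y - g ≫ f + g ≫ (inv (𝟙 X - f ≫ g) ≫ (𝟙 X - f ≫ g)) ≫ f := by
          simp only [Preadditive.sub_comp, Preadditive.comp_sub, Preadditive.add_comp,
            Category.assoc, Category.id_comp, Category.comp_id]; abel
      _ = 𝟙 Y := by rw [hr]; simp

lemma isIso_id_sub_comp_comm {X Y : C} (f : X ⟶ Y) (g : Y ⟶ X) :
    IsIso (𝟙 X - f ≫ g) ↔ IsIso (𝟙 Y - g ≫ f) :=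
  ⟨isIso_id_sub_comp_swap, isIso_id_sub_comp_swap⟩

lemma inJacobsonRadical_iff {X Y : C} (f : X ⟶ Y) :
    InJacobsonRadical f ↔ ∀ g : Y ⟶ X, IsIso (𝟙 Y - g ≫ f) :=
  forall_congr' fun g => isIso_id_sub_comp_comm f g

lemma inJacobsonRadical_zero {X Y : C} : InJacobsonRadical (0 : X ⟶ Y) := fun g => by
  rw [zero_comp, sub_zero]; infer_instance

lemma InJacobsonRadical.comp_left {W X Y : C} (v : W ⟶ X) {f : X ⟶ Y}
    (hf : InJacobsonRadical f) : InJacobsonRadical (v ≫ f) :=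
  (inJacobsonRadical_iff _).2 fun g => by
    simpa using (inJacobsonRadical_iff f).1 hf (g ≫ v)

lemma InJacobsonRadical.add {X Y : C} {f f' : X ⟶ Y} (hf : InJacobsonRadical f)
    (hf' : InJacobsonRadical f') : InJacobsonRadical (f + f') := fun g => by
  have := hf g
  set u := inv (𝟙 X - f ≫ g)
  have hu : IsIso (𝟙 X - u ≫ f' ≫ g) := by
    have := hf' (g ≫ u)
    rwa [← Category.assoc, isIso_id_sub_comp_comm] at this
  have : 𝟙 X - (f + f') ≫ g = (𝟙 X - f ≫ g) ≫ (𝟙 X - u ≫ f' ≫ g) := by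
    rw [Preadditive.comp_sub, Category.comp_id, IsIso.hom_inv_id_assoc, Preadditive.add_comp]
    abel
  rw [this]
  infer_instance

lemma InJacobsonRadical.isZero_of_comp_eq_id {Y Z : C} {j : Z ⟶ Y} (hj : InJacobsonRadical j)
    {s : Y ⟶ Z} (hs : s ≫ j = 𝟙 Y) : IsZero Y := by
  have := (inJacobsonRadical_iff j).1 hj s
  rw [hs, sub_self] at this
  exact (IsZero.iff_id_eq_zero Y).2 (by rw [← IsIso.hom_inv_id (0 : Y ⟶ Y), zero_comp])

lemma inJacobsonRadical_iff_forall_comp_ne_id {Y Z : C} (hY₀ : ¬ IsZero Y)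
    (hY : ∀ a : Y ⟶ Y, IsIso a ∨ IsIso (𝟙 Y - a)) (j : Z ⟶ Y) :
    InJacobsonRadical j ↔ ∀ s : Y ⟶ Z, s ≫ j ≠ 𝟙 Y :=
  ⟨fun hj _ hs => hY₀ (hj.isZero_of_comp_eq_id hs), fun hj => (inJacobsonRadical_iff j).2
    fun g => (hY (g ≫ j)).resolve_left fun _ => hj (inv (g ≫ j) ≫ g) (by simp)⟩

section RadComp

variable [HasBinaryBiproducts C]

def radCompSubgroup (I : CatIdeal C) (X Y : C) : AddSubgroup (X ⟶ Y) where
  carrier := {g | ∃ (Z : C) (i : X ⟶ Z) (j : Z ⟶ Y),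
    i ∈ I.carrier ∧ InJacobsonRadical j ∧ i ≫ j = g}
  zero_mem' := ⟨X, 0, 0, I.zero_mem, inJacobsonRadical_zero, zero_comp⟩
  neg_mem' := by
    rintro _ ⟨Z, i, j, hi, hj, rfl⟩
    exact ⟨Z, -i, j, I.neg_mem hi, hj, Preadditive.neg_comp _ _⟩
  add_mem' := by
    rintro _ _ ⟨Z, i, j, hi, hj, rfl⟩ ⟨Z', i', j', hi', hj', rfl⟩
    refine ⟨Z ⊞ Z', biprod.lift i i', biprod.desc j j', ?_, ?_, biprod.lift_desc⟩
    · rw [biprod.lift_eq]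
      exact I.add_mem (I.comp_right _ hi) (I.comp_right _ hi')
    · rw [biprod.desc_eq]
      exact (hj.comp_left _).add (hj'.comp_left _)

lemma memRadCompIdeal_iff_exists_comp (I : CatIdeal C) {X Y : C} (f : X ⟶ Y) :
    MemRadCompIdeal I f ↔ ∃ (Z : C) (i : X ⟶ Z) (j : Z ⟶ Y),
      i ∈ I.carrier ∧ InJacobsonRadical j ∧ i ≫ j = f :=
  Iff.of_eq (congrArg (f ∈ ·) (AddSubgroup.closure_eq (radCompSubgroup I X Y)))

end RadComp

theorem exists_commute_pow_eq_pow_two_mul_mul {K A : Type*} [CommRing K] [Ring A] [Algebra K A]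
    [IsArtinian K A] (a : A) :
    ∃ n ≠ 0, ∃ b : A, Commute a b ∧ a ^ n = a ^ (2 * n) * b := by
  let S := Algebra.adjoin K {a}
  have : IsArtinian S S :=
    isArtinian_of_tower K (inferInstanceAs (IsArtinian K (Subalgebra.toSubmodule S)))
  let a' : S := ⟨a, Algebra.self_mem_adjoin_singleton K a⟩
  obtain ⟨n, hn⟩ := IsArtinian.range_smul_pow_stabilizes S a'
  have hmem : a' ^ (n + 1) ∈ LinearMap.range (a' ^ (2 * (n + 1)) • LinearMap.id : S →ₗ[S] S) := by
    rw [← hn _ (by omega), hn (n + 1) (by omega)]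
    exact ⟨1, by simp⟩
  obtain ⟨b, hb⟩ := hmem
  refine ⟨n + 1, by omega, b, ?_, ?_⟩
  · exact Algebra.commute_of_mem_adjoin_of_forall_mem_commute b.2 (by simp)
  · simpa using congrArg Subtype.val hb.symm

theorem isUnit_or_isUnit_one_sub_of_isIdempotentElem {K A : Type*} [CommRing K] [Ring A]
    [Algebra K A] [IsArtinian K A] (hA : ∀ e : A, IsIdempotentElem e → e = 0 ∨ e = 1)
    (a : A) : IsUnit a ∨ IsUnit (1 - a) := by
  obtain ⟨n, hn, b, hab, hb⟩ := exists_commute_pow_eq_pow_two_mul_mul (K := K) a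
  have hpow : a ^ (2 * n) = a ^ n * a ^ n := by rw [two_mul, pow_add]
  have hcomm : Commute (a ^ n) b := hab.pow_left n
  have hfix : a ^ n * (a ^ n * b) = a ^ n := by rw [← mul_assoc, ← hpow, ← hb]
  have he : IsIdempotentElem (a ^ n * b) := by
    rw [IsIdempotentElem, mul_assoc, ← mul_assoc b, ← hcomm.eq, ← mul_assoc, hfix]
  rcases hA _ he with h | h
  · exact Or.inr (IsNilpotent.isUnit_one_sub ⟨n, by rw [← hfix, h, mul_zero]⟩)
  · exact Or.inl ((isUnit_pow_iff hn).1 (hcomm.isUnit_mul_iff.1 (h ▸ isUnit_one)).1)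

section Indecomposable

variable [HasZeroObject C] [HasBinaryBiproducts C] [IsIdempotentComplete C]

lemma IndecomposableObj.eq_zero_or_eq_id_of_idem {Y : C} (hY : IndecomposableObj Y)
    (e : Y ⟶ Y) (he : e ≫ e = e) : e = 0 ∨ e = 𝟙 Y := by
  obtain ⟨W, i, r, hir, hri⟩ := IsIdempotentComplete.idempotents_split Y e he
  obtain ⟨W', i', r', hir', hri'⟩ :=
    IsIdempotentComplete.idempotents_split Y (𝟙 Y - e) (Idempotents.idem_of_id_sub_idem e he)
  have hir'_zero : i ≫ r' = 0 := calc
    i ≫ r' = i ≫ (r' ≫ i') ≫ r' := by simp [hir']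
    _ = 0 := by rw [hri', ← hri]; simp [reassoc_of% hir]
  have hi'r_zero : i' ≫ r = 0 := calc
    i' ≫ r = i' ≫ (r ≫ i) ≫ r := by simp [hir]
    _ = 0 := by rw [hri, ← sub_sub_cancel (𝟙 Y) e, ← hri']; simp [reassoc_of% hir']
  let b : BinaryBicone W W' := ⟨Y, r, r', i, i', hir, hir'_zero, hi'r_zero, hir'⟩
  have hb : b.IsBilimit := isBinaryBilimitOfTotal b (by simp [b, hri, hri'])
  rcases hY.2 W W' (biprod.uniqueUpToIso W W' hb) with h | h
  · exact Or.inl (by rw [← hri, h.eq_zero_of_src i, comp_zero])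
  · exact Or.inr (sub_eq_zero.1 (by rw [← hri', h.eq_zero_of_src i', comp_zero])).symm

lemma IndecomposableObj.isIso_or_isIso_id_sub (K : Type*) [Field K] [Linear K C] {Y : C}
    [FiniteDimensional K (Y ⟶ Y)] (hY : IndecomposableObj Y) (a : Y ⟶ Y) :
    IsIso a ∨ IsIso (𝟙 Y - a) := by
  have : FiniteDimensional K (End Y) := ‹FiniteDimensional K (Y ⟶ Y)›
  simpa only [isUnit_iff_isIso, End.one_def] using
    isUnit_or_isUnit_one_sub_of_isIdempotentElem (K := K) (A := End Y)
      hY.eq_zero_or_eq_id_of_idem a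

end Indecomposable

/-- For a morphism `f : X ⟶ Y` between indecomposable objects of a Hom-finite Krull-Schmidt
`K`-category: `f` is left `I`-irreducible iff `f ∈ I(X,Y) \ (J∘I)(X,Y)`. -/
theorem leftIIrreducible_iff_mem_sub_radComp
    (K : Type*) [Field K] [Linear K C] [HasZeroObject C]
    [HasShift C ℤ] [∀ n : ℤ, (shiftFunctor C n).Additive] [Pretriangulated C]
    [∀ X Y : C, FiniteDimensional K (X ⟶ Y)] [IsIdempotentComplete C]
    [HasBinaryBiproducts C]
    (I : CatIdeal C) {X Y : C} (f : X ⟶ Y)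
    (hX : IndecomposableObj X) (hY : IndecomposableObj Y) :
    LeftIIrreducible I f ↔ (f ∈ I.carrier ∧ ¬ MemRadCompIdeal I f) := by
  have hJ {Z : C} (j : Z ⟶ Y) :=
    inJacobsonRadical_iff_forall_comp_ne_id hY.1 (hY.isIso_or_isIso_id_sub K) j
  simp only [LeftIIrreducible, memRadCompIdeal_iff_exists_comp, hJ]
  push Not
  grind
end
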